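/- Let R = Q × [t−r, t+r) ∈ ℛ with r ≥ 1 and with Q a dyadic cube of side length L satisfying eᵗe^{2r} ≤ L < eᵗe^{8r}/2. Then R₁ = Q' × [t−r, t+r) is a parent of R, where Q' ⊆ ℝⁿ is the unique dyadic cube with side length 2L that contains Q; moreover ρ(R₁) = 2ⁿρ(R). -/
import Mathlib


open MeasureTheory Set Filter
open scoped ENNReal NNReal Topology

noncomputable section

/-- The `ax+b`-group `S = ℝⁿ ⋉ ℝ`, as a measure space with its right Haar
measure `ρ`, which is Lebesgue measure `dx dt` on `ℝⁿ × ℝ`. -/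
abbrev Sp (n : ℕ) : Type := (Fin n → ℝ) × ℝ

/-- `Q` is a dyadic cube in `ℝⁿ` with side length `L` and center `c`. -/
def IsDyadicCube (n : ℕ) (Q : Set (Fin n → ℝ)) (L : ℝ) (c : Fin n → ℝ) : Prop :=
  ∃ (k : ℤ) (m : Fin n → ℤ), L = 2 ^ k ∧
    Q = {x | ∀ i, (m i : ℝ) * 2 ^ k ≤ x i ∧ x i < ((m i : ℝ) + 1) * 2 ^ k} ∧
    c = fun i => ((m i : ℝ) + 1 / 2) * 2 ^ k

/-- Admissibility of the parameters `(Q, L, c, t, r)` of a Calderón–Zygmund set: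
`Q` is a dyadic cube with side length `L` and center `c`, `r > 0`, and
`e² eᵗ r ≤ L < e⁸ eᵗ r` if `r < 1`, while `eᵗ e^{2r} ≤ L < eᵗ e^{8r}` if `r ≥ 1`. -/
def CZParam (n : ℕ) (Q : Set (Fin n → ℝ)) (L : ℝ) (c : Fin n → ℝ) (t r : ℝ) : Prop :=
  IsDyadicCube n Q L c ∧ 0 < r ∧
    (r < 1 → Real.exp 2 * Real.exp t * r ≤ L ∧ L < Real.exp 8 * Real.exp t * r) ∧
    (1 ≤ r → Real.exp t * Real.exp (2 * r) ≤ L ∧ L < Real.exp t * Real.exp (8 * r))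

/-- The set `Q × [t - r, t + r)` in `S`. -/
def czSet (n : ℕ) (Q : Set (Fin n → ℝ)) (t r : ℝ) : Set (Sp n) :=
  Q ×ˢ Set.Ico (t - r) (t + r)

/-- `R` is a Calderón–Zygmund set, i.e. a member of the family `ℛ`. -/
def IsCZSet (n : ℕ) (R : Set (Sp n)) : Prop :=
  ∃ Q L c t r, CZParam n Q L c t r ∧ R = czSet n Q t r

/-- Inverse hyperbolic cosine. -/
def arcoshR (x : ℝ) : ℝ := Real.log (x + Real.sqrt (x ^ 2 - 1))

/-- The left-invariant Riemannian (hyperbolic) metric on `S`, given by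
`cosh d((x,t),(x',t')) = (e^{t'-t} + e^{t-t'} + e^{-t-t'} |x-x'|²) / 2`. -/
def hypDist (n : ℕ) (p q : Sp n) : ℝ :=
  arcoshR ((Real.exp (q.2 - p.2) + Real.exp (p.2 - q.2) +
    Real.exp (-p.2 - q.2) * (∑ i, (p.1 i - q.1 i) ^ 2)) / 2)

/-- The open ball of center `p` and radius `r` for the hyperbolic metric. -/
def hypBall (n : ℕ) (p : Sp n) (r : ℝ) : Set (Sp n) := {q | hypDist n p q < r}

/-- The maximal function associated with a family `𝒜` of subsets of `S`:
`x ↦ sup { ρ(R)⁻¹ ∫_R |f| dρ : R ∈ 𝒜, x ∈ R }`. -/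
def maximalFn (n : ℕ) (𝒜 : Set (Set (Sp n))) (f : Sp n → ℝ) (x : Sp n) : ℝ≥0∞ :=
  ⨆ R ∈ 𝒜, ⨆ (_ : x ∈ R), (volume R)⁻¹ * ∫⁻ y in R, ‖f y‖₊ ∂volume

/-- The sharp maximal function associated with a family `𝒜` of subsets of `S`:
`x ↦ sup { ρ(R)⁻¹ ∫_R |f - f_R| dρ : R ∈ 𝒜, x ∈ R }`, where `f_R = ρ(R)⁻¹ ∫_R f dρ`. -/
def sharpFn (n : ℕ) (𝒜 : Set (Set (Sp n))) (f : Sp n → ℝ) (x : Sp n) : ℝ≥0∞ :=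
  ⨆ R ∈ 𝒜, ⨆ (_ : x ∈ R), (volume R)⁻¹ *
    ∫⁻ y in R, ENNReal.ofReal |f y - (volume R).toReal⁻¹ * ∫ z in R, f z ∂volume| ∂volume

/-- The `L^p`-norm (`p ∈ (0,∞]`) of an `ℝ≥0∞`-valued function. -/
def lpNormE {α : Type*} [MeasurableSpace α] (g : α → ℝ≥0∞) (p : ℝ≥0∞)
    (μ : Measure α) : ℝ≥0∞ :=
  if p = ∞ then essSup g μ else (∫⁻ x, g x ^ p.toReal ∂μ) ^ (1 / p.toReal)

/-- `M` is a parent of `R`: both are Calderón–Zygmund sets, `M` can be decomposed into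
`k` pairwise disjoint Calderón–Zygmund sets (`k = 2` or `k = 2ⁿ`) one of which is `R`,
and `(3/2) ρ(R) ≤ ρ(M) ≤ max{3, 2ⁿ} ρ(R)`. -/
def IsParent (n : ℕ) (M R : Set (Sp n)) : Prop :=
  IsCZSet n M ∧ IsCZSet n R ∧
    (∃ k : ℕ, (k = 2 ∨ k = 2 ^ n) ∧ ∃ Rs : Fin k → Set (Sp n),
      (∀ i, IsCZSet n (Rs i)) ∧ Pairwise (Function.onFun Disjoint Rs) ∧
      M = ⋃ i, Rs i ∧ ∃ i, Rs i = R) ∧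
    (3 / 2 : ℝ≥0∞) * volume R ≤ volume M ∧
    volume M ≤ (max 3 (2 ^ n) : ℕ) * volume R

/-- A dyadic grid on `S`: a collection `{𝒟_j}_{j ∈ ℤ}` of partitions of `S` into
pairwise disjoint Calderón–Zygmund sets with the nesting, parent, splitting and
limiting properties (i)–(v) of Theorem 3.1. -/
def IsDyadicGrid (n : ℕ) (D : ℤ → Set (Set (Sp n))) : Prop :=
  (∀ j, ∀ R ∈ D j, IsCZSet n R) ∧
  (∀ j, (D j).PairwiseDisjoint id) ∧
  (∀ j, ⋃₀ D j = Set.univ) ∧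
  (∀ l k : ℤ, l ≤ k → ∀ R ∈ D l, ∀ R' ∈ D k, R ⊆ R' ∨ R ∩ R' = ∅) ∧
  (∀ j, ∀ R ∈ D j, ∃! R', R' ∈ D (j + 1) ∧ R ⊆ R') ∧
  (∀ j, ∀ R ∈ D j, ∀ R' ∈ D (j + 1), R ⊆ R' → volume R' ≤ 2 ^ n * volume R) ∧
  (∀ j, ∀ R ∈ D j, ∃ k : ℕ, (k = 2 ∨ k = 2 ^ n) ∧ ∃ Rs : Fin k → Set (Sp n),
    (∀ i, Rs i ∈ D (j - 1)) ∧ Pairwise (Function.onFun Disjoint Rs) ∧ R = ⋃ i, Rs i ∧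
    ∀ i, volume R / 2 ^ n ≤ volume (Rs i) ∧ volume (Rs i) ≤ (2 / 3 : ℝ≥0∞) * volume R) ∧
  (∀ x : Sp n, ∀ Rx : ℤ → Set (Sp n), (∀ j, Rx j ∈ D j ∧ x ∈ Rx j) →
    Tendsto (fun j => volume (Rx j)) atBot (nhds 0) ∧
    Tendsto (fun j => volume (Rx j)) atTop (nhds ⊤))

/-- `a` is an `H¹`-atom supported in a set of the family `𝒜`: `a ∈ L¹` is supported in
some `R ∈ 𝒜`, `‖a‖_∞ ≤ ρ(R)⁻¹` and `∫_S a dρ = 0`. -/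
def IsAtomIn (n : ℕ) (𝒜 : Set (Set (Sp n))) (a : Sp n → ℂ) : Prop :=
  ∃ R ∈ 𝒜, Function.support a ⊆ R ∧
    (∀ᵐ x ∂(volume : Measure (Sp n)), ‖a x‖ ≤ (volume R).toReal⁻¹) ∧
    Integrable a volume ∧ ∫ x, a x ∂(volume : Measure (Sp n)) = 0

/-- `g = ∑_j lam_j a_j` is an atomic decomposition of `g` with atoms supported in sets of
the family `𝒜`: the `a_j` are atoms, `∑_j |lam_j| < ∞` and the series converges to `g`
in `L¹`. -/
def IsAtomicDecomp (n : ℕ) (𝒜 : Set (Set (Sp n))) (g : Sp n → ℂ)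
    (lam : ℕ → ℂ) (a : ℕ → Sp n → ℂ) : Prop :=
  Integrable g volume ∧ (∀ j, IsAtomIn n 𝒜 (a j)) ∧ Summable (fun j => ‖lam j‖) ∧
    Tendsto (fun N => ∫ x, ‖g x - ∑ j ∈ Finset.range N, lam j * a j x‖ ∂volume)
      atTop (nhds 0)

/-- The atomic `H¹`-norm of `g` associated with the family `𝒜`: the infimum of
`∑_j |lam_j|` over all atomic decompositions of `g` with atoms supported in sets of `𝒜`. -/
def H1Norm (n : ℕ) (𝒜 : Set (Set (Sp n))) (g : Sp n → ℂ) : ℝ :=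
  sInf {s : ℝ | ∃ lam a, IsAtomicDecomp n 𝒜 g lam a ∧ s = ∑' j, ‖lam j‖}


section Aux

open MeasureTheory Set

lemma cube_vol (n : ℕ) (k : ℤ) (m : Fin n → ℤ) :
    volume {x : Fin n → ℝ | ∀ i, (m i : ℝ) * 2 ^ k ≤ x i ∧ x i < ((m i : ℝ) + 1) * 2 ^ k}
      = ENNReal.ofReal (2 ^ k) ^ n := by
  have h : {x : Fin n → ℝ | ∀ i, (m i : ℝ) * 2 ^ k ≤ x i ∧ x i < ((m i : ℝ) + 1) * 2 ^ k}
      = Set.pi Set.univ (fun i => Set.Ico ((m i : ℝ) * 2 ^ k) (((m i : ℝ) + 1) * 2 ^ k)) := by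
    ext x; simp [Set.mem_pi]
  rw [h, volume_pi_pi]
  have h2 : ∀ i : Fin n, volume (Set.Ico ((m i : ℝ) * 2 ^ k) (((m i : ℝ) + 1) * 2 ^ k))
      = ENNReal.ofReal (2 ^ k) := by
    intro i; rw [Real.volume_Ico]; ring_nf
  simp [h2]

lemma czSet_vol (n : ℕ) (Q : Set (Fin n → ℝ)) (t r : ℝ) :
    volume (czSet n Q t r) = volume Q * ENNReal.ofReal (2 * r) := by
  rw [czSet, MeasureTheory.Measure.volume_eq_prod, MeasureTheory.Measure.prod_prod,
    Real.volume_Ico]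
  ring_nf

end Aux


section Aux2
open MeasureTheory Set

/-- subcube of the doubled cube determined by a sign pattern. -/
def subCube (n : ℕ) (k : ℤ) (m' : Fin n → ℤ) (ε : Fin n → Fin 2) : Set (Fin n → ℝ) :=
  {x | ∀ i, ((2 * m' i + ((ε i : ℕ) : ℤ) : ℤ) : ℝ) * 2 ^ k ≤ x i ∧
    x i < (((2 * m' i + ((ε i : ℕ) : ℤ) : ℤ) : ℝ) + 1) * 2 ^ k}

end Aux2

end
/-- Let `R = Q × [t−r, t+r) ∈ ℛ` with `r ≥ 1` and
`eᵗe^{2r} ≤ L < eᵗe^{8r}/2`. Then `R₁ = Q' × [t−r, t+r)` is a parent of `R`, where `Q'`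
is the (unique) dyadic cube with side length `2L` containing `Q`; moreover
`ρ(R₁) = 2ⁿ ρ(R)`. -/
theorem parent_horizontal (n : ℕ) (hn : 1 ≤ n) (Q : Set (Fin n → ℝ)) (L : ℝ)
    (c : Fin n → ℝ) (t r : ℝ) (h : CZParam n Q L c t r) (hr : 1 ≤ r)
    (hL₁ : Real.exp t * Real.exp (2 * r) ≤ L)
    (hL₂ : L < Real.exp t * Real.exp (8 * r) / 2)
    (Q' : Set (Fin n → ℝ)) (c' : Fin n → ℝ)
    (hQ' : IsDyadicCube n Q' (2 * L) c') (hQQ' : Q ⊆ Q') :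
    IsParent n (czSet n Q' t r) (czSet n Q t r) ∧
      volume (czSet n Q' t r) = 2 ^ n * volume (czSet n Q t r) := by
  classical
  obtain ⟨⟨k, m, hLk, hQeq, hceq⟩, hr0, -, -⟩ := id h
  obtain ⟨k', m', hLk', hQ'eq, hc'eq⟩ := id hQ'
  have hp : (0:ℝ) < (2:ℝ) ^ k := by positivity
  have hLpos : (0:ℝ) < L := hLk ▸ hp
  have hk' : k' = k + 1 := by
    have he : (2:ℝ) ^ (k + 1) = 2 ^ k' := by
      rw [zpow_add₀ (by norm_num : (2:ℝ) ≠ 0), ← hLk, ← hLk']; ring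
    exact (zpow_right_injective₀ (by norm_num) (by norm_num) he).symm
  subst hk'
  have h2k : (2:ℝ) ^ (k + 1) = 2 * 2 ^ k := by
    rw [zpow_add₀ (by norm_num : (2:ℝ) ≠ 0)]; ring
  have hL₂' : L < Real.exp t * Real.exp (8 * r) := by
    have : (0:ℝ) < Real.exp t * Real.exp (8 * r) := by positivity
    linarith
  -- membership characterization of Q'
  have hQ'mem : ∀ x : Fin n → ℝ, x ∈ Q' ↔
      ∀ i, ((2 * m' i : ℤ) : ℝ) * 2 ^ k ≤ x i ∧ x i < (((2 * m' i : ℤ) : ℝ) + 2) * 2 ^ k := by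
    intro x
    rw [hQ'eq]
    simp only [Set.mem_setOf_eq]
    refine forall_congr' fun i => ?_
    have e1 : ((m' i : ℝ)) * 2 ^ (k + 1) = ((2 * m' i : ℤ) : ℝ) * 2 ^ k := by
      push_cast; rw [h2k]; ring
    have e2 : ((m' i : ℝ) + 1) * 2 ^ (k + 1) = (((2 * m' i : ℤ) : ℝ) + 2) * 2 ^ k := by
      push_cast; rw [h2k]; ring
    rw [e1, e2]
  -- corner bounds
  have hcorner : ∀ i, 2 * m' i ≤ m i ∧ m i ≤ 2 * m' i + 1 := by
    intro i
    have hpQ : (fun j => (m j : ℝ) * 2 ^ k) ∈ Q := by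
      rw [hQeq]; intro j
      refine ⟨le_refl _, ?_⟩
      show (m j : ℝ) * 2 ^ k < ((m j : ℝ) + 1) * 2 ^ k
      nlinarith
    obtain ⟨h1, h2⟩ := (hQ'mem _).mp (hQQ' hpQ) i
    constructor
    · have : ((2 * m' i : ℤ) : ℝ) ≤ (m i : ℝ) := le_of_mul_le_mul_right h1 hp
      exact_mod_cast this
    · have : (m i : ℝ) < ((2 * m' i : ℤ) : ℝ) + 2 := lt_of_mul_lt_mul_right h2 hp.le
      have : m i < 2 * m' i + 2 := by exact_mod_cast this
      omega
  set ε₀ : Fin n → Fin 2 := fun i => if m i = 2 * m' i then 0 else 1 with hε₀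
  have hm : ∀ i, m i = 2 * m' i + ((ε₀ i : ℕ) : ℤ) := by
    intro i
    by_cases hh : m i = 2 * m' i
    · simp [hε₀, hh]
    · have := hcorner i
      simp only [hε₀, hh, if_false]
      simp only [Fin.val_one]
      omega
  -- each subcube is a CZ set
  have hsubCZ : ∀ ε : Fin n → Fin 2, IsCZSet n (czSet n (subCube n k m' ε) t r) := by
    intro ε
    exact ⟨subCube n k m' ε, L, fun i => (((2 * m' i + ((ε i : ℕ) : ℤ) : ℤ) : ℝ) + 1 / 2) * 2 ^ k,
      t, r, ⟨⟨k, fun i => 2 * m' i + ((ε i : ℕ) : ℤ), hLk, rfl, rfl⟩, hr0,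
        fun h1 => absurd h1 (not_lt.2 hr), fun _ => ⟨hL₁, hL₂'⟩⟩, rfl⟩
  -- Q equals the subcube with pattern ε₀
  have hQsub : subCube n k m' ε₀ = Q := by
    rw [hQeq]
    exact Set.ext fun x => forall_congr' fun i => by rw [hm i]
  -- Q' is the union of the subcubes
  have hunion : Q' = ⋃ ε : Fin n → Fin 2, subCube n k m' ε := by
    ext x
    rw [hQ'mem, Set.mem_iUnion]
    constructor
    · intro hx
      refine ⟨fun i => if x i < (((2 * m' i : ℤ) : ℝ) + 1) * 2 ^ k then 0 else 1,
        fun i => ?_⟩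
      obtain ⟨h1, h2⟩ := hx i
      by_cases hc : x i < (((2 * m' i : ℤ) : ℝ) + 1) * 2 ^ k
      · simp only [hc, if_true, Fin.val_zero]
        push_cast at h1 h2 hc ⊢
        constructor <;> linarith
      · simp only [hc, if_false, Fin.val_one]
        rw [not_lt] at hc
        push_cast at h1 h2 hc ⊢
        constructor <;> linarith
    · rintro ⟨ε, hx⟩ i
      obtain ⟨h1, h2⟩ := hx i
      have hεle : ((ε i : ℕ) : ℝ) ≤ 1 := by
        have := (ε i).is_lt; exact_mod_cast Nat.lt_succ_iff.mp this
      have hεge : (0:ℝ) ≤ ((ε i : ℕ) : ℝ) := Nat.cast_nonneg _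
      push_cast at h1 h2 ⊢
      constructor <;> nlinarith
  -- disjointness
  have hdisj : ∀ ε ε' : Fin n → Fin 2, ε ≠ ε' →
      Disjoint (subCube n k m' ε) (subCube n k m' ε') := by
    intro ε ε' hne
    obtain ⟨i, hi⟩ := Function.ne_iff.mp hne
    rw [Set.disjoint_left]
    intro x hx hx'
    obtain ⟨a1, a2⟩ := hx i
    obtain ⟨b1, b2⟩ := hx' i
    have hz : (2 * m' i + ((ε i : ℕ) : ℤ)) ≠ (2 * m' i + ((ε' i : ℕ) : ℤ)) := by
      intro hh
      exact hi (Fin.val_injective (by exact_mod_cast add_left_cancel hh))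
    rcases lt_or_gt_of_ne hz with hlt | hlt
    · have : ((2 * m' i + ((ε i : ℕ) : ℤ) : ℤ) : ℝ) + 1 ≤
          ((2 * m' i + ((ε' i : ℕ) : ℤ) : ℤ) : ℝ) := by
        exact_mod_cast Int.add_one_le_iff.mpr hlt
      nlinarith
    · have : ((2 * m' i + ((ε' i : ℕ) : ℤ) : ℤ) : ℝ) + 1 ≤
          ((2 * m' i + ((ε i : ℕ) : ℤ) : ℤ) : ℝ) := by
        exact_mod_cast Int.add_one_le_iff.mpr hlt
      nlinarith
  -- volumes
  have hvQ : volume Q = ENNReal.ofReal (2 ^ k) ^ n := by rw [hQeq]; exact cube_vol n k m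
  have hvQ' : volume Q' = ENNReal.ofReal (2 ^ (k + 1)) ^ n := by
    rw [hQ'eq]; exact cube_vol n (k + 1) m'
  have hof : ENNReal.ofReal ((2:ℝ) ^ (k + 1)) = 2 * ENNReal.ofReal ((2:ℝ) ^ k) := by
    rw [h2k, ENNReal.ofReal_mul (by norm_num : (0:ℝ) ≤ 2)]
    norm_num
  have hvol : volume (czSet n Q' t r) = 2 ^ n * volume (czSet n Q t r) := by
    rw [czSet_vol, czSet_vol, hvQ, hvQ', hof, mul_pow, mul_assoc]
  refine ⟨⟨?_, ?_, ?_, ?_, ?_⟩, hvol⟩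
  · exact ⟨Q', 2 * L, c', t, r, ⟨hQ', hr0, fun h1 => absurd h1 (not_lt.2 hr),
      fun _ => ⟨le_trans hL₁ (by linarith), by linarith⟩⟩, rfl⟩
  · exact ⟨Q, L, c, t, r, h, rfl⟩
  · refine ⟨2 ^ n, Or.inr rfl,
      fun j => czSet n (subCube n k m' (finFunctionFinEquiv.symm j)) t r,
      fun j => hsubCZ _, ?_, ?_, ⟨finFunctionFinEquiv ε₀, ?_⟩⟩
    · intro j j' hjj'
      have hne : finFunctionFinEquiv.symm j ≠ finFunctionFinEquiv.symm j' :=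
        fun hh => hjj' (finFunctionFinEquiv.symm.injective hh)
      have hd := hdisj _ _ hne
      refine Set.disjoint_left.mpr ?_
      rintro ⟨x, s⟩ hx hx'
      exact Set.disjoint_left.mp hd hx.1 hx'.1
    · have : (⋃ j, subCube n k m' (finFunctionFinEquiv.symm j)) =
          ⋃ ε : Fin n → Fin 2, subCube n k m' ε := by
        ext x
        simp only [Set.mem_iUnion]
        exact ⟨fun ⟨j, hj⟩ => ⟨_, hj⟩, fun ⟨ε, hε⟩ => ⟨finFunctionFinEquiv ε, by
          rwa [Equiv.symm_apply_apply]⟩⟩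
      rw [czSet, hunion, ← this]
      exact Set.iUnion_prod_const
    · show czSet n (subCube n k m' (finFunctionFinEquiv.symm (finFunctionFinEquiv ε₀))) t r
          = czSet n Q t r
      rw [Equiv.symm_apply_apply, hQsub]
  · rw [hvol]
    have h1 : (3 / 2 : ℝ≥0∞) ≤ 2 ^ n := by
      calc (3 / 2 : ℝ≥0∞) ≤ 2 := by
            rw [ENNReal.div_le_iff (by norm_num) (by norm_num)]; norm_num
        _ = 2 ^ 1 := (pow_one 2).symm
        _ ≤ 2 ^ n := pow_le_pow_right₀ (by norm_num) hn
    exact mul_le_mul_left h1 _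
  · rw [hvol]
    have h1 : (2 : ℝ≥0∞) ^ n ≤ ((max 3 (2 ^ n) : ℕ) : ℝ≥0∞) := by
      have h2 : (2 ^ n : ℕ) ≤ max 3 (2 ^ n) := le_max_right _ _
      calc (2 : ℝ≥0∞) ^ n = ((2 ^ n : ℕ) : ℝ≥0∞) := by push_cast; rfl
        _ ≤ _ := by exact_mod_cast h2
    exact mul_le_mul_left h1 _
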